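/- Let P ∈ ℝ^{2*} ⊗ ℝ^{n*} ⊗ ℝ² ⊗ ℝⁿ (a tensor P^A_{A'}{}^B_{B'}, symmetric in no assumed way) with n ≥ 1. The relation Ric^A_{A'}{}^B_{B'} = (n+2)·P^A_{A'}{}^B_{B'} − P^A_{B'}{}^B_{A'} − P^B_{A'}{}^A_{B'} between two tensors Ric and P is equivalent to the four componentwise relations: Ric^{(A}_{(A'}{}^{B)}_{B')} = n·P^{(A}_{(A'}{}^{B)}_{B')}, Ric^{[A}_{[A'}{}^{B]}_{B']} = (n+4)·P^{[A}_{[A'}{}^{B]}_{B']}, Ric^{(A}_{[A'}{}^{B)}_{B']} = (n+2)·P^{(A}_{[A'}{}^{B)}_{B']}, Ric^{[A}_{(A'}{}^{B]}_{B')} = (n+2)·P^{[A}_{(A'}{}^{B]}_{B')}. In particular, P is uniquely determined by Ric via P = (1/n)·Ric^{(sym,sym)} + (1/(n+4))·Ric^{[alt,alt]} + (1/(n+2))·Ric^{(sym,alt)} + (1/(n+2))·Ric^{[alt,sym]}. -/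
import Mathlib


variable {n : ℕ}

/-- Symmetrization in both the upper pair (A,B) and the lower pair (A',B'). -/
noncomputable def symSym (T : Fin 2 → Fin n → Fin 2 → Fin n → ℝ) (A : Fin 2) (A' : Fin n)
    (B : Fin 2) (B' : Fin n) : ℝ :=
  (T A A' B B' + T B A' A B' + T A B' B A' + T B B' A A') / 4

/-- Alternation in both the upper pair and the lower pair. -/
noncomputable def altAlt (T : Fin 2 → Fin n → Fin 2 → Fin n → ℝ) (A : Fin 2) (A' : Fin n)
    (B : Fin 2) (B' : Fin n) : ℝ :=
  (T A A' B B' - T B A' A B' - T A B' B A' + T B B' A A') / 4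

/-- Symmetrization in the upper pair, alternation in the lower pair. -/
noncomputable def symAlt (T : Fin 2 → Fin n → Fin 2 → Fin n → ℝ) (A : Fin 2) (A' : Fin n)
    (B : Fin 2) (B' : Fin n) : ℝ :=
  (T A A' B B' + T B A' A B' - T A B' B A' - T B B' A A') / 4

/-- Alternation in the upper pair, symmetrization in the lower pair. -/
noncomputable def altSym (T : Fin 2 → Fin n → Fin 2 → Fin n → ℝ) (A : Fin 2) (A' : Fin n)
    (B : Fin 2) (B' : Fin n) : ℝ :=
  (T A A' B B' - T B A' A B' + T A B' B A' - T B B' A A') / 4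

/-- The relation `Ric = (n+2)·P − P^{swap lower} − P^{swap upper}` is equivalent to the
four componentwise relations on the symmetry types, and then `P` is uniquely determined
by `Ric` via the stated formula. -/
theorem stmt14 (n : ℕ) (hn : 1 ≤ n) (P Ric : Fin 2 → Fin n → Fin 2 → Fin n → ℝ) :
    ((∀ (A B : Fin 2) (A' B' : Fin n),
        Ric A A' B B' = (n + 2 : ℝ) * P A A' B B' - P A B' B A' - P B A' A B') ↔
      ((∀ (A B : Fin 2) (A' B' : Fin n),
          symSym Ric A A' B B' = (n : ℝ) * symSym P A A' B B') ∧
       (∀ (A B : Fin 2) (A' B' : Fin n),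
          altAlt Ric A A' B B' = (n + 4 : ℝ) * altAlt P A A' B B') ∧
       (∀ (A B : Fin 2) (A' B' : Fin n),
          symAlt Ric A A' B B' = (n + 2 : ℝ) * symAlt P A A' B B') ∧
       (∀ (A B : Fin 2) (A' B' : Fin n),
          altSym Ric A A' B B' = (n + 2 : ℝ) * altSym P A A' B B'))) ∧
    ((∀ (A B : Fin 2) (A' B' : Fin n),
        Ric A A' B B' = (n + 2 : ℝ) * P A A' B B' - P A B' B A' - P B A' A B') →
      ∀ (A B : Fin 2) (A' B' : Fin n),
        P A A' B B' = (1 / (n : ℝ)) * symSym Ric A A' B B'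
          + (1 / (n + 4 : ℝ)) * altAlt Ric A A' B B'
          + (1 / (n + 2 : ℝ)) * symAlt Ric A A' B B'
          + (1 / (n + 2 : ℝ)) * altSym Ric A A' B B') := by
  have hne : (n:ℝ) ≠ 0 := by exact_mod_cast Nat.one_le_iff_ne_zero.mp hn
  have hn4 : (n:ℝ) + 4 ≠ 0 := by positivity
  have hn2 : (n:ℝ) + 2 ≠ 0 := by positivity
  constructor
  · constructor
    · intro h
      refine ⟨?_, ?_, ?_, ?_⟩ <;> intro A B A' B' <;>
        simp only [symSym, altAlt, symAlt, altSym, h A B A' B', h B A A' B', h A B B' A',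
          h B A B' A'] <;> ring
    · rintro ⟨h1, h2, h3, h4⟩ A B A' B'
      have e1 := h1 A B A' B'
      have e2 := h2 A B A' B'
      have e3 := h3 A B A' B'
      have e4 := h4 A B A' B'
      simp only [symSym, altAlt, symAlt, altSym] at e1 e2 e3 e4
      linarith
  · intro h A B A' B'
    simp only [symSym, altAlt, symAlt, altSym, h A B A' B', h B A A' B', h A B B' A', h B A B' A']
    field_simp
    ring
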